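/- Let $\theta^1 > \cdots > \theta^K$, full-support prior $\mu_0$, and cost $c$ with $\theta^K \le c < \theta^1$. Denote by $\underline{k}$ the largest index with $\theta^{\underline{k}} > c$. For any nondecreasing alternating path from the zero profile $0^\Theta$ to an endpoint $\underline{q}^\Theta \le 1^\Theta$ using only efficient direction types, the path-bound $\sum_{t} \mu_0^{k_t}\int_{q_t^{k_t}}^{q_{t+1}^{k_t}} [\theta^{k_t} - c - w^N(\tilde{q}, q_t^{-k_t})] d\tilde{q}$ equals $\sum_{k=1}^{\underline{k}} \mu_0^k \underline{q}^k (\theta^k - c)$ minus $\int_0^{Q_M} w^N(q_Q^\Theta)\,dQ$, where $Q_M = \sum_k \mu_0^k \underline{q}^k$ is the total ex-ante disclosure probability and $q_Q^\Theta$ is the path position parameterized by cumulative ex-ante probability $Q$. -/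

import Mathlib

open Finset

/-- Skepticism value at a disclosure profile. -/
noncomputable def wProf {K : ℕ} (θ μ : Fin K → ℝ) (c : ℝ) (p : Fin K → ℝ) : ℝ :=
  max ((∑ j, μ j * (1 - p j) * θ j) / (∑ j, μ j * (1 - p j)) - c) 0

/-- Cumulative ex-ante disclosure probability induced along a path up to step `t`. -/
noncomputable def Qlow {K : ℕ} (μ : Fin K → ℝ) (q : ℕ → Fin K → ℝ) (kt : ℕ → Fin K)
    (t : ℕ) : ℝ :=
  ∑ s ∈ Finset.range t, μ (kt s) * (q (s + 1) (kt s) - q s (kt s))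

/-- Decomposition of the path bound into the total-surplus term minus the
skepticism-compensation integral, reparameterized by cumulative ex-ante probability. -/
theorem stmt_17 (K : ℕ) (hK : 2 ≤ K) (θ μ : Fin K → ℝ) (c : ℝ)
    (hθ : StrictAnti θ) (hμ : ∀ k, 0 < μ k) (hμsum : ∑ k, μ k = 1)
    (hc1 : θ ⟨K - 1, by omega⟩ ≤ c) (hc2 : c < θ ⟨0, by omega⟩)
    (T : ℕ) (q : ℕ → Fin K → ℝ) (kt : ℕ → Fin K)
    (h0 : ∀ k, q 0 k = 0)
    (hstep : ∀ t < T, q t (kt t) < q (t + 1) (kt t) ∧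
      ∀ j : Fin K, j ≠ kt t → q (t + 1) j = q t j)
    (hend : ∀ k, 0 ≤ q T k ∧ q T k ≤ 1)
    (heff : ∀ t < T, c < θ (kt t))
    (qQ : ℝ → Fin K → ℝ)
    (hqQ : ∀ t < T, ∀ Q ∈ Set.Icc (Qlow μ q kt t) (Qlow μ q kt (t + 1)),
      qQ Q = Function.update (q t) (kt t)
        (q t (kt t) + (Q - Qlow μ q kt t) / μ (kt t))) :
    (∑ t ∈ Finset.range T, μ (kt t) *
        ∫ x in (q t (kt t))..(q (t + 1) (kt t)),
          (θ (kt t) - c - wProf θ μ c (Function.update (q t) (kt t) x))) =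
      (∑ k ∈ univ.filter (fun k => c < θ k), μ k * q T k * (θ k - c)) -
        ∫ Q in (0:ℝ)..(Qlow μ q kt T), wProf θ μ c (qQ Q) := by
  have hμne : ∀ k, μ k ≠ 0 := fun k => (hμ k).ne'
  set last : Fin K := ⟨K - 1, by omega⟩ with hlastdef
  -- step monotonicity
  have hstep_le : ∀ t < T, ∀ k, q t k ≤ q (t + 1) k := by
    intro t ht k
    rcases eq_or_ne k (kt t) with h | h
    · subst h; exact (hstep t ht).1.le
    · rw [(hstep t ht).2 k h]
  have hmono : ∀ s t, s ≤ t → ∀ k, t ≤ T → q s k ≤ q t k := by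
    intro s t hst k
    refine Nat.le_induction (fun _ => le_rfl) (fun n hn ih hT => ?_) t hst
    exact le_trans (ih (by omega)) (hstep_le n (by omega) k)
  have hub : ∀ t, t ≤ T → ∀ k, q t k ≤ 1 :=
    fun t ht k => (hmono t T ht k le_rfl).trans (hend k).2
  have hlb : ∀ t, t ≤ T → ∀ k, 0 ≤ q t k := by
    intro t ht k
    have := hmono 0 t (Nat.zero_le _) k ht
    rwa [h0 k] at this
  -- inefficient coordinates never move
  have hnever : ∀ k : Fin K, θ k ≤ c → ∀ t, t ≤ T → q t k = 0 := by
    intro k hk t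
    induction t with
    | zero => intro _; exact h0 k
    | succ n ih =>
      intro h
      have hne : k ≠ kt n := by
        intro he
        exact absurd (heff n (by omega)) (by rw [← he]; exact not_lt.2 hk)
      rw [(hstep n (by omega)).2 k hne, ih (by omega)]
  have hlastzero : ∀ t, t ≤ T → q t last = 0 := hnever last hc1
  -- continuity of the integrand in x on each step interval
  have hcontup : ∀ (v : Fin K → ℝ) (k j : Fin K),
      Continuous (fun x : ℝ => Function.update v k x j) := by
    intro v k j
    rcases eq_or_ne j k with h | h
    · subst h; simpa [Function.update_apply] using continuous_id'
    · simpa [Function.update_apply, h] using (continuous_const : Continuous fun _ : ℝ => v j)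
  have hden : ∀ t < T, ∀ x ∈ Set.Icc (q t (kt t)) (q (t + 1) (kt t)),
      0 < ∑ j, μ j * (1 - Function.update (q t) (kt t) x j) := by
    intro t ht x hx
    have hupd_le : ∀ j, Function.update (q t) (kt t) x j ≤ 1 := by
      intro j
      rcases eq_or_ne j (kt t) with h | h
      · subst h; rw [Function.update_self]
        exact hx.2.trans (hub (t + 1) (by omega) (kt t))
      · rw [Function.update_of_ne h]; exact hub t (by omega) j
    refine Finset.sum_pos' (fun j _ => mul_nonneg (hμ j).le (by linarith [hupd_le j])) ?_
    refine ⟨last, Finset.mem_univ _, ?_⟩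
    have hne : last ≠ kt t := by
      intro he
      exact absurd (heff t ht) (by rw [← he]; exact not_lt.2 hc1)
    rw [Function.update_of_ne hne, hlastzero t (by omega)]
    simpa using hμ last
  have hcont : ∀ t < T, ContinuousOn
      (fun x => wProf θ μ c (Function.update (q t) (kt t) x))
      (Set.Icc (q t (kt t)) (q (t + 1) (kt t))) := by
    intro t ht
    have hnum : Continuous fun x : ℝ =>
        ∑ j, μ j * (1 - Function.update (q t) (kt t) x j) * θ j := by
      apply continuous_finset_sum
      intro j _
      exact (continuous_const.mul ((continuous_const.sub (hcontup _ _ j)))).mul continuous_const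
    have hdenc : Continuous fun x : ℝ =>
        ∑ j, μ j * (1 - Function.update (q t) (kt t) x j) := by
      apply continuous_finset_sum
      intro j _
      exact continuous_const.mul (continuous_const.sub (hcontup _ _ j))
    unfold wProf
    exact (((hnum.continuousOn.div hdenc.continuousOn
      (fun x hx => (hden t ht x hx).ne')).sub continuousOn_const).sup continuousOn_const)
  have hintab : ∀ t < T, IntervalIntegrable
      (fun x => wProf θ μ c (Function.update (q t) (kt t) x)) MeasureTheory.volume
      (q t (kt t)) (q (t + 1) (kt t)) := by
    intro t ht
    have h2 : ContinuousOn (fun x => wProf θ μ c (Function.update (q t) (kt t) x))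
        (Set.uIcc (q t (kt t)) (q (t + 1) (kt t))) := by
      rw [Set.uIcc_of_le (hstep t ht).1.le]; exact hcont t ht
    exact h2.intervalIntegrable
  -- Qlow increments
  have hBA : ∀ t, Qlow μ q kt (t + 1) =
      Qlow μ q kt t + μ (kt t) * (q (t + 1) (kt t) - q t (kt t)) := by
    intro t; exact Finset.sum_range_succ _ t
  have hABle : ∀ t < T, Qlow μ q kt t ≤ Qlow μ q kt (t + 1) := by
    intro t ht
    rw [hBA t]
    nlinarith [hμ (kt t), (hstep t ht).1]
  -- change of variables per step
  have hQint : ∀ t < T, (∫ Q in (Qlow μ q kt t)..(Qlow μ q kt (t + 1)),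
      wProf θ μ c (qQ Q)) = μ (kt t) *
      ∫ x in (q t (kt t))..(q (t + 1) (kt t)),
        wProf θ μ c (Function.update (q t) (kt t) x) := by
    intro t ht
    set A := Qlow μ q kt t
    set B := Qlow μ q kt (t + 1)
    set k := kt t
    set a := q t k
    set b := q (t + 1) k
    have hstep1 : (∫ Q in A..B, wProf θ μ c (qQ Q)) =
        ∫ Q in A..B, wProf θ μ c (Function.update (q t) k (Q / μ k + (a - A / μ k))) := by
      apply intervalIntegral.integral_congr
      intro Q hQ
      rw [Set.uIcc_of_le (hABle t ht)] at hQ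
      show wProf θ μ c (qQ Q) = wProf θ μ c (Function.update (q t) k (Q / μ k + (a - A / μ k)))
      rw [hqQ t ht Q hQ]
      congr 1
      rw [sub_div]
      congr 1
      simp only [a, k, A]
      ring
    have hsub := intervalIntegral.integral_comp_div_add
      (a := A) (b := B) (fun y => wProf θ μ c (Function.update (q t) k y))
      (hμne k) (a - A / μ k)
    have e1 : A / μ k + (a - A / μ k) = a := by ring
    have e2 : B / μ k + (a - A / μ k) = b := by
      have : B = A + μ k * (b - a) := hBA t
      rw [this, add_div, mul_div_cancel_left₀ _ (hμne k)]
      ring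
    rw [e1, e2, smul_eq_mul] at hsub
    rw [hstep1, hsub]
  -- integrability of the Q-integrand on each adjacent interval
  have hQintg : ∀ t < T, IntervalIntegrable (fun Q => wProf θ μ c (qQ Q))
      MeasureTheory.volume (Qlow μ q kt t) (Qlow μ q kt (t + 1)) := by
    intro t ht
    set A := Qlow μ q kt t
    set B := Qlow μ q kt (t + 1)
    set k := kt t
    set a := q t k
    set b := q (t + 1) k
    have hBA' : B = A + μ k * (b - a) := hBA t
    apply ContinuousOn.intervalIntegrable
    rw [Set.uIcc_of_le (hABle t ht)]
    have hmaps : Set.MapsTo (fun Q => a + (Q - A) / μ k) (Set.Icc A B) (Set.Icc a b) := by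
      intro Q hQ
      constructor
      · have : 0 ≤ (Q - A) / μ k := div_nonneg (by linarith [hQ.1]) (hμ k).le
        linarith
      · have h1 : (Q - A) / μ k ≤ (B - A) / μ k :=
          (div_le_div_iff_of_pos_right (hμ k)).2 (by linarith [hQ.2])
        have h2 : (B - A) / μ k = b - a := by
          rw [hBA', add_sub_cancel_left, mul_div_cancel_left₀ _ (hμne k)]
        linarith
    have hcomp : ContinuousOn
        (fun Q => wProf θ μ c (Function.update (q t) k (a + (Q - A) / μ k)))
        (Set.Icc A B) :=
      (hcont t ht).comp ((continuous_const.add ((continuous_id.sub continuous_const).div_const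
        (μ k))).continuousOn) hmaps
    apply hcomp.congr
    intro Q hQ
    show wProf θ μ c (qQ Q) = _
    rw [hqQ t ht Q hQ]
  -- split the Q-integral into adjacent intervals
  have hQ0 : Qlow μ q kt 0 = 0 := by simp [Qlow]
  have hsumQ : (∫ Q in (0:ℝ)..(Qlow μ q kt T), wProf θ μ c (qQ Q)) =
      ∑ t ∈ Finset.range T, ∫ Q in (Qlow μ q kt t)..(Qlow μ q kt (t + 1)),
        wProf θ μ c (qQ Q) := by
    rw [intervalIntegral.sum_integral_adjacent_intervals hQintg, hQ0]
  -- surplus sum identity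
  have htel : ∀ k : Fin K, q T k = ∑ t ∈ Finset.range T, (q (t + 1) k - q t k) := by
    intro k
    rw [Finset.sum_range_sub (fun t => q t k), h0, sub_zero]
  have hsurplus : (∑ k ∈ univ.filter (fun k => c < θ k), μ k * q T k * (θ k - c)) =
      ∑ t ∈ Finset.range T, μ (kt t) * (q (t + 1) (kt t) - q t (kt t)) * (θ (kt t) - c) := by
    have hext : (∑ k ∈ univ.filter (fun k => c < θ k), μ k * q T k * (θ k - c)) =
        ∑ k : Fin K, μ k * q T k * (θ k - c) := by
      apply Finset.sum_subset (Finset.filter_subset _ _)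
      intro k _ hk
      have hkc : ¬ c < θ k := by simpa using hk
      rw [hnever k (not_lt.1 hkc) T le_rfl, mul_zero, zero_mul]
    rw [hext]
    have : ∀ k : Fin K, μ k * q T k * (θ k - c) =
        ∑ t ∈ Finset.range T, μ k * (q (t + 1) k - q t k) * (θ k - c) := by
      intro k
      rw [htel k, Finset.mul_sum, Finset.sum_mul]
    simp_rw [this]
    rw [Finset.sum_comm]
    apply Finset.sum_congr rfl
    intro t htm
    rw [Finset.mem_range] at htm
    apply Finset.sum_eq_single (kt t)
    · intro j _ hj
      rw [(hstep t htm).2 j hj]; ring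
    · intro h; exact absurd (Finset.mem_univ _) h
  -- per-step split of the x-integral
  have hsplit : ∀ t < T, μ (kt t) * (∫ x in (q t (kt t))..(q (t + 1) (kt t)),
      (θ (kt t) - c - wProf θ μ c (Function.update (q t) (kt t) x))) =
      μ (kt t) * (q (t + 1) (kt t) - q t (kt t)) * (θ (kt t) - c) -
      μ (kt t) * ∫ x in (q t (kt t))..(q (t + 1) (kt t)),
        wProf θ μ c (Function.update (q t) (kt t) x) := by
    intro t ht
    rw [intervalIntegral.integral_sub intervalIntegrable_const (hintab t ht),
      intervalIntegral.integral_const, smul_eq_mul]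
    ring
  -- assemble
  calc (∑ t ∈ Finset.range T, μ (kt t) *
        ∫ x in (q t (kt t))..(q (t + 1) (kt t)),
          (θ (kt t) - c - wProf θ μ c (Function.update (q t) (kt t) x)))
      = ∑ t ∈ Finset.range T,
          (μ (kt t) * (q (t + 1) (kt t) - q t (kt t)) * (θ (kt t) - c) -
          μ (kt t) * ∫ x in (q t (kt t))..(q (t + 1) (kt t)),
            wProf θ μ c (Function.update (q t) (kt t) x)) := by
        apply Finset.sum_congr rfl
        intro t htm
        exact hsplit t (Finset.mem_range.1 htm)
    _ = (∑ t ∈ Finset.range T, μ (kt t) * (q (t + 1) (kt t) - q t (kt t)) * (θ (kt t) - c)) -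
        ∑ t ∈ Finset.range T, μ (kt t) * ∫ x in (q t (kt t))..(q (t + 1) (kt t)),
            wProf θ μ c (Function.update (q t) (kt t) x) := Finset.sum_sub_distrib _ _
    _ = (∑ k ∈ univ.filter (fun k => c < θ k), μ k * q T k * (θ k - c)) -
        ∫ Q in (0:ℝ)..(Qlow μ q kt T), wProf θ μ c (qQ Q) := by
        rw [hsurplus, hsumQ]
        congr 1
        apply Finset.sum_congr rfl
        intro t htm
        exact (hQint t (Finset.mem_range.1 htm)).symm
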